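/- Incommensurable ground state energy of the modified square lattice at φ = −π/4: Let φ = −π/4, q_1 = π − arctan(√((√5 − 1)/2)), q_2 = π/2, and λ̂ = −cos q_1 · cos φ. Then the smallest eigenvalue of the Hermitian 2×2 matrix Ĵ_sq((q_1, q_2), λ̂) equals −(1/2)·√(11 + 5√5). -/

import Mathlib

/-- The Fourier-transformed dressed coupling matrix of the modified square
lattice, with `J₁ = cos φ`, `J₂ = sin φ`. -/
noncomputable def Jsq (φ q1 q2 lam : ℝ) : Matrix (Fin 2) (Fin 2) ℂ :=
  !![((2 * Real.cos q1 * Real.cos φ + lam : ℝ) : ℂ),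
     ((Real.sin φ : ℝ) : ℂ) +
       (Complex.exp (-(Complex.I * (q1 : ℂ))) + Complex.exp (-(Complex.I * (q2 : ℂ)))
         + Complex.exp (-(Complex.I * ((q1 : ℂ) + (q2 : ℂ))))) * ((Real.cos φ : ℝ) : ℂ);
     ((Real.sin φ : ℝ) : ℂ) +
       (Complex.exp (Complex.I * (q1 : ℂ)) + Complex.exp (Complex.I * (q2 : ℂ))
         + Complex.exp (Complex.I * ((q1 : ℂ) + (q2 : ℂ)))) * ((Real.cos φ : ℝ) : ℂ),
     ((-lam : ℝ) : ℂ)]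

/-- The smallest eigenvalue of the Hermitian matrix `!![a, b; conj b, a]`
(with real `a` and `b ≠ 0`) is `a - |b|`. -/
lemma herm2_least (a : ℝ) (b : ℂ) (hb : b ≠ 0) :
    IsLeast {e : ℝ | ∃ v : Fin 2 → ℂ, v ≠ 0 ∧
      (!![(a : ℂ), b; (starRingEnd ℂ) b, (a : ℂ)]).mulVec v = (e : ℂ) • v}
      (a - ‖b‖) := by
  have habs : (0:ℝ) < ‖b‖ := norm_pos_iff.mpr hb
  have hsq : ((starRingEnd ℂ) b) * b = ((‖b‖ : ℝ) : ℂ)^2 := by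
    rw [mul_comm, Complex.mul_conj, ← Complex.sq_norm]
    push_cast
    ring
  constructor
  · refine ⟨![b, -(‖b‖ : ℂ)], ?_, ?_⟩
    · intro h
      apply hb
      simpa using congrFun h 0
    · funext i
      fin_cases i <;>
        simp [Matrix.mulVec, dotProduct, Fin.sum_univ_two]
      · ring
      · rw [hsq]; ring
  · rintro e ⟨v, hv, hmv⟩
    have h0 := congrFun hmv 0
    have h1 := congrFun hmv 1
    simp [Matrix.mulVec, dotProduct, Fin.sum_univ_two] at h0 h1
    have e0 : b * v 1 = ((e - a : ℝ) : ℂ) * v 0 := by push_cast; linear_combination h0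
    have e1 : (starRingEnd ℂ) b * v 0 = ((e - a : ℝ) : ℂ) * v 1 := by
      push_cast; linear_combination h1
    have key : (((e - a)^2 : ℝ) : ℂ) * v 0 = (((‖b‖)^2 : ℝ) : ℂ) * v 0 := by
      push_cast
      calc ((e:ℂ) - a)^2 * v 0 = ((e:ℂ) - a) * (((e - a : ℝ) : ℂ) * v 0) := by push_cast; ring
        _ = ((e:ℂ) - a) * (b * v 1) := by rw [e0]
        _ = b * (((e - a : ℝ):ℂ) * v 1) := by push_cast; ring
        _ = b * ((starRingEnd ℂ) b * v 0) := by rw [e1]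
        _ = (((starRingEnd ℂ) b) * b) * v 0 := by ring
        _ = _ := by rw [hsq]
    have key1 : (((e - a)^2 : ℝ) : ℂ) * v 1 = (((‖b‖)^2 : ℝ) : ℂ) * v 1 := by
      push_cast
      calc ((e:ℂ) - a)^2 * v 1 = ((e:ℂ) - a) * (((e - a : ℝ) : ℂ) * v 1) := by push_cast; ring
        _ = ((e:ℂ) - a) * ((starRingEnd ℂ) b * v 0) := by rw [e1]
        _ = (starRingEnd ℂ) b * (((e - a : ℝ):ℂ) * v 0) := by push_cast; ring
        _ = (starRingEnd ℂ) b * (b * v 1) := by rw [e0]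
        _ = (((starRingEnd ℂ) b) * b) * v 1 := by ring
        _ = _ := by rw [hsq]
    have hne : v 0 ≠ 0 ∨ v 1 ≠ 0 := by
      by_contra h
      push_neg at h
      apply hv
      funext i
      fin_cases i
      · exact h.1
      · exact h.2
    have hreal : (e - a)^2 = (‖b‖)^2 := by
      rcases hne with h | h
      · have := mul_right_cancel₀ h key
        exact_mod_cast this
      · have := mul_right_cancel₀ h key1
        exact_mod_cast this
    nlinarith [sq_nonneg (e - a + ‖b‖)]

lemma expI_eq (x : ℝ) : Complex.exp (Complex.I * x) =
    (Real.cos x : ℂ) + (Real.sin x : ℂ) * Complex.I := by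
  rw [mul_comm, Complex.exp_mul_I, ← Complex.ofReal_cos, ← Complex.ofReal_sin]

lemma expNegI_eq (x : ℝ) : Complex.exp (-(Complex.I * x)) =
    (Real.cos x : ℂ) - (Real.sin x : ℂ) * Complex.I := by
  rw [show -(Complex.I * (x:ℂ)) = ((-x : ℝ):ℂ) * Complex.I by push_cast; ring,
    Complex.exp_mul_I, ← Complex.ofReal_cos, ← Complex.ofReal_sin,
    Real.cos_neg, Real.sin_neg]
  push_cast; ring

lemma key_val :
    -(1/2 : ℝ) * Real.sqrt (11 + 5 * Real.sqrt 5)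
      = -(Real.sqrt ((Real.sqrt 5 - 1) / 2) * (Real.sqrt 2 / 2))
        - Real.sqrt (Real.sqrt 5 + 1) := by
  have h5 : Real.sqrt 5 ^ 2 = 5 := Real.sq_sqrt (by norm_num)
  have h5' : (1:ℝ) ≤ Real.sqrt 5 := by nlinarith [Real.sqrt_nonneg 5]
  set t := Real.sqrt ((Real.sqrt 5 - 1) / 2) with ht
  have ht0 : 0 ≤ t := Real.sqrt_nonneg _
  have ht2 : t ^ 2 = (Real.sqrt 5 - 1) / 2 := Real.sq_sqrt (by linarith)
  have hr2 : Real.sqrt 2 ^ 2 = 2 := Real.sq_sqrt (by norm_num)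
  set u := Real.sqrt (Real.sqrt 5 + 1) with hu
  have hu0 : 0 ≤ u := Real.sqrt_nonneg _
  have hu2 : u ^ 2 = Real.sqrt 5 + 1 := Real.sq_sqrt (by linarith)
  have htru : t * Real.sqrt 2 * u = 2 := by
    have h1 : (t * Real.sqrt 2 * u) ^ 2 = 4 := by
      rw [mul_pow, mul_pow, ht2, hr2, hu2]; nlinarith
    nlinarith [mul_nonneg (mul_nonneg ht0 (Real.sqrt_nonneg 2)) hu0]
  have h1 : (t * Real.sqrt 2 + 2 * u) ^ 2 = 11 + 5 * Real.sqrt 5 := by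
    nlinarith
  have h2 : Real.sqrt (11 + 5 * Real.sqrt 5) = t * Real.sqrt 2 + 2 * u := by
    rw [← h1, Real.sqrt_sq (by positivity)]
  rw [h2]; ring

/-- Incommensurable ground state energy of the modified square lattice at
`φ = −π/4`: with `q₁ = π − arctan √((√5 − 1)/2)`, `q₂ = π/2` and the ground
state gauge `λ̂ = −cos q₁ · cos φ`, the smallest eigenvalue of
`Ĵ_sq((q₁, q₂), λ̂)` equals `−(1/2)·√(11 + 5√5)`. -/
theorem square_lattice_incommensurable_energy :
    IsLeast
      {e : ℝ | ∃ v : Fin 2 → ℂ, v ≠ 0 ∧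
        (Jsq (-(Real.pi / 4))
            (Real.pi - Real.arctan (Real.sqrt ((Real.sqrt 5 - 1) / 2)))
            (Real.pi / 2)
            (-Real.cos (Real.pi - Real.arctan (Real.sqrt ((Real.sqrt 5 - 1) / 2)))
              * Real.cos (-(Real.pi / 4)))).mulVec v = (e : ℂ) • v}
      (-(1/2) * Real.sqrt (11 + 5 * Real.sqrt 5)) := by
  have h5 : Real.sqrt 5 ^ 2 = 5 := Real.sq_sqrt (by norm_num)
  have h5' : (1:ℝ) ≤ Real.sqrt 5 := by nlinarith [Real.sqrt_nonneg 5]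
  set t := Real.sqrt ((Real.sqrt 5 - 1) / 2) with ht
  have ht0 : 0 ≤ t := Real.sqrt_nonneg _
  have ht2 : t ^ 2 = (Real.sqrt 5 - 1) / 2 := Real.sq_sqrt (by linarith)
  have hu1 : t * Real.sqrt (1 + t ^ 2) = 1 := by
    have h1 : (0:ℝ) ≤ 1 + t^2 := by positivity
    have h2 : (t * Real.sqrt (1 + t^2))^2 = 1 := by
      rw [mul_pow, Real.sq_sqrt h1]; nlinarith
    nlinarith [mul_nonneg ht0 (Real.sqrt_nonneg (1 + t^2))]
  have hc1 : Real.cos (Real.pi - Real.arctan t) = -t := by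
    rw [Real.cos_pi_sub, Real.cos_arctan]
    field_simp
    nlinarith [Real.sqrt_nonneg (1 + t^2)]
  have hs1 : Real.sin (Real.pi - Real.arctan t) = t ^ 2 := by
    rw [Real.sin_pi_sub, Real.sin_arctan]
    field_simp
    nlinarith [Real.sqrt_nonneg (1 + t^2)]
  have hr2 : Real.sqrt 2 ^ 2 = 2 := Real.sq_sqrt (by norm_num)
  have hr0 : 0 < Real.sqrt 2 := Real.sqrt_pos.mpr (by norm_num)
  have hcphi : Real.cos (-(Real.pi / 4)) = Real.sqrt 2 / 2 := by
    rw [Real.cos_neg, Real.cos_pi_div_four]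
  have hsphi : Real.sin (-(Real.pi / 4)) = -(Real.sqrt 2 / 2) := by
    rw [Real.sin_neg, Real.sin_pi_div_four]
  have hq12 : Real.cos (Real.pi - Real.arctan t + Real.pi / 2) = -t ^ 2 := by
    rw [Real.cos_add, Real.cos_pi_div_two, Real.sin_pi_div_two, hc1, hs1]; ring
  have hs12 : Real.sin (Real.pi - Real.arctan t + Real.pi / 2) = -t := by
    rw [Real.sin_add, Real.cos_pi_div_two, Real.sin_pi_div_two, hc1, hs1]; ring
  set b : ℂ := ((Real.sqrt 2 / 2 * (-(1 + t + t ^ 2)) : ℝ) : ℂ)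
      + ((Real.sqrt 2 / 2 * (t - t ^ 2 - 1) : ℝ) : ℂ) * Complex.I with hb
  have hconjb : (starRingEnd ℂ) b =
      ((Real.sqrt 2 / 2 * (-(1 + t + t ^ 2)) : ℝ) : ℂ)
      - ((Real.sqrt 2 / 2 * (t - t ^ 2 - 1) : ℝ) : ℂ) * Complex.I := by
    rw [hb, map_add, map_mul, Complex.conj_I, Complex.conj_ofReal, Complex.conj_ofReal]
    ring
  have hnorm : Complex.normSq b = Real.sqrt 5 + 1 := by
    rw [hb, Complex.normSq_add_mul_I]
    linear_combination ((1 + 3*t^2 + t^4)/2) * hr2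
      + (t^2 + (Real.sqrt 5 - 1)/2 + 3) * ht2 + (1/4) * h5
  have hbne : b ≠ 0 := by
    intro h
    rw [h, Complex.normSq_zero] at hnorm
    nlinarith
  have habs : ‖b‖ = Real.sqrt (Real.sqrt 5 + 1) := by
    rw [Complex.norm_def, hnorm]
  set a : ℝ := -(t * (Real.sqrt 2 / 2)) with ha
  have hM : Jsq (-(Real.pi / 4)) (Real.pi - Real.arctan t) (Real.pi / 2)
      (-Real.cos (Real.pi - Real.arctan t) * Real.cos (-(Real.pi / 4)))
      = !![(a : ℂ), b; (starRingEnd ℂ) b, (a : ℂ)] := by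
    have hcast : -(Complex.I * (((Real.pi - Real.arctan t : ℝ) : ℂ) + ((Real.pi / 2 : ℝ) : ℂ)))
        = -(Complex.I * ((Real.pi - Real.arctan t + Real.pi / 2 : ℝ) : ℂ)) := by
      push_cast; ring
    have hcast' : Complex.I * (((Real.pi - Real.arctan t : ℝ) : ℂ) + ((Real.pi / 2 : ℝ) : ℂ))
        = Complex.I * ((Real.pi - Real.arctan t + Real.pi / 2 : ℝ) : ℂ) := by
      push_cast; ring
    rw [Jsq, hcast, hcast', expNegI_eq, expNegI_eq, expNegI_eq, expI_eq, expI_eq, expI_eq,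
      hc1, hs1, hq12, hs12, Real.cos_pi_div_two, Real.sin_pi_div_two, hcphi, hsphi,
      hb, hconjb, ha]
    ext i j
    fin_cases i <;> fin_cases j <;>
      simp only [Matrix.cons_val', Matrix.cons_val_zero, Matrix.cons_val_one,
        Matrix.head_cons, Matrix.head_fin_const, Matrix.empty_val',
        Matrix.cons_val_fin_one, Matrix.of_apply] <;>
      push_cast <;> ring
  -- the eigenvalue identity
  have key : -(1/2) * Real.sqrt (11 + 5 * Real.sqrt 5) = a - ‖b‖ := by
    rw [habs, ha, ht]
    exact key_val
  rw [key, hM]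
  exact herm2_least a b hbne
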